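/- (Part of Proposition 3.6) For j, k ∈ ℤ with j ≠ 0 and j + k ≠ 0, on modules in category O one has [L_k, T_j(a,b)] = (j-k) T_{j+k}(a,b), where T_j(a,b) = Σ_{α∈Δ°} Σ_{n∈ℤ} x_{-α}⊗t^{-n}(a) x_α⊗t^{n+j}(b) + Σ_i Σ_{n∈ℤ} h_i⊗t^{-n}(a) hⁱ⊗t^{n+j}(b) + K(a)L_j(b) + K(b)L_j(a) + 2h^∨ L_j(ab). -/
import Mathlib

open Function

lemma pair_comm
    {V : Type*} [AddCommGroup V] [Module ℂ V]
    (X Y : ℤ → Module.End ℂ V) (L : Module.End ℂ V) (j k : ℤ)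
    (hX : ∀ m : ℤ, L * X m - X m * L = (m : ℂ) • X (m + k))
    (hY : ∀ m : ℤ, L * Y m - Y m * L = (m : ℂ) • Y (m + k))
    (hfin : ∀ (j' : ℤ) (v : V), {n : ℤ | X (-n) (Y (n + j') v) ≠ 0}.Finite)
    (v : V) :
    L (∑ᶠ n : ℤ, X (-n) (Y (n + j) v)) - ∑ᶠ n : ℤ, X (-n) (Y (n + j) (L v))
      = ((j : ℂ) - k) • ∑ᶠ n : ℤ, X (-n) (Y (n + (j + k)) v) := by
  have hcX : ∀ (m : ℤ) (w : V), L (X m w) = X m (L w) + (m : ℂ) • (X (m + k)) w := by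
    intro m w
    have h := congrArg (fun T : Module.End ℂ V => T w) (hX m)
    simp only [LinearMap.sub_apply, Module.End.mul_apply, LinearMap.smul_apply] at h
    exact sub_eq_iff_eq_add'.mp h
  have hcY : ∀ (m : ℤ) (w : V), L (Y m w) = Y m (L w) + (m : ℂ) • (Y (m + k)) w := by
    intro m w
    have h := congrArg (fun T : Module.End ℂ V => T w) (hY m)
    simp only [LinearMap.sub_apply, Module.End.mul_apply, LinearMap.smul_apply] at h
    exact sub_eq_iff_eq_add'.mp h
  set f : ℤ → V := fun n => X (-n) (Y (n + j) v) with hf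
  set f' : ℤ → V := fun n => X (-n) (Y (n + j) (L v)) with hf'
  set hh : ℤ → V := fun n => (((n : ℂ) + j)) • X (-n) (Y (n + (j + k)) v) with hhh
  set g : ℤ → V := fun n => (-(n : ℂ)) • X (-n + k) (Y (n + j) v) with hg
  have key : ∀ n : ℤ, L (f n) = f' n + hh n + g n := by
    intro n
    have e1 : L (f n) = X (-n) (L (Y (n + j) v)) + ((-n : ℤ) : ℂ) • X (-n + k) (Y (n + j) v) :=
      hcX (-n) (Y (n + j) v)
    rw [e1, hcY (n + j) v, map_add, map_smul]
    have : n + j + k = n + (j + k) := by ring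
    rw [this]
    push_cast
    abel
  -- support finiteness
  have sf : (support f).Finite := hfin j v
  have sf' : (support f').Finite := hfin j (L v)
  have sh : (support hh).Finite := by
    apply (hfin (j + k) v).subset
    intro n hn
    simp only [mem_support, hhh] at hn
    intro h0
    exact hn (by rw [h0, smul_zero])
  have sg : (support g).Finite := by
    apply (((hfin (j + k) v).image (fun m => m + k)).subset)
    intro n hn
    simp only [mem_support, hg] at hn
    refine ⟨n - k, ?_, by ring⟩
    have e2 : -(n - k) = -n + k := by ring
    have e3 : n - k + (j + k) = n + j := by ring
    simp only [Set.mem_setOf_eq, e2, e3]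
    intro h0
    exact hn (by rw [h0, smul_zero])
  have h1 : L (∑ᶠ n, f n) = ∑ᶠ n, L (f n) := L.toAddMonoidHom.map_finsum sf
  have h2 : ∑ᶠ n, L (f n) = (∑ᶠ n, f' n) + ((∑ᶠ n, hh n) + ∑ᶠ n, g n) := by
    rw [finsum_congr key]
    rw [show (fun n => f' n + hh n + g n) = fun n => f' n + (hh n + g n) by
      funext n; abel] -- not needed if we associate properly
    rw [finsum_add_distrib sf' ((sh.union sg).subset (support_add _ _)),
      finsum_add_distrib sh sg]
  -- shift the g sum
  have h3 : ∑ᶠ n, g n = ∑ᶠ n, g (n + k) :=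
    (finsum_comp_equiv (Equiv.addRight k)).symm
  have sgk : (support fun n => g (n + k)).Finite :=
    sg.preimage (fun a _ b _ h => by simpa using h : Set.InjOn (fun n : ℤ => n + k) _)
  have h4 : (∑ᶠ n, hh n) + ∑ᶠ n, g (n + k) = ∑ᶠ n, (hh n + g (n + k)) :=
    (finsum_add_distrib sh sgk).symm
  have h5 : ∀ n : ℤ, hh n + g (n + k) = ((j : ℂ) - k) • X (-n) (Y (n + (j + k)) v) := by
    intro n
    have e2 : -(n + k) + k = -n := by ring
    have e3 : n + k + j = n + (j + k) := by ring
    simp only [hhh, hg, e2, e3]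
    rw [← add_smul]
    push_cast
    ring_nf
  have sfin : (support fun n : ℤ => X (-n) (Y (n + (j + k)) v)).Finite := hfin (j + k) v
  calc L (∑ᶠ n, f n) - ∑ᶠ n, f' n
      = (∑ᶠ n, hh n) + ∑ᶠ n, g n := by rw [h1, h2]; abel
    _ = ∑ᶠ n, (hh n + g (n + k)) := by rw [h3, h4]
    _ = ∑ᶠ n, ((j : ℂ) - k) • X (-n) (Y (n + (j + k)) v) := finsum_congr h5
    _ = ((j : ℂ) - k) • ∑ᶠ n, X (-n) (Y (n + (j + k)) v) := (smul_finsum' _ sfin).symm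


/-- The operator `T_j(a,b)` of Proposition 3.5, evaluated pointwise on a vector
`v` of a category `O` module (only finitely many terms of each `Σ_{n∈ℤ}` act
nonzero on `v`):
`T_j(a,b) = Σ_{α∈Δ°} Σ_{n∈ℤ} x_{-α}⊗t^{-n}(a) x_α⊗t^{n+j}(b)
          + Σ_i Σ_{n∈ℤ} h_i⊗t^{-n}(a) hⁱ⊗t^{n+j}(b)
          + K(a)L_j(b) + K(b)L_j(a) + 2h^∨ L_j(ab)`. -/
noncomputable def Tjop
    {A : Type*} [CommRing A] [Algebra ℂ A]
    {V : Type*} [AddCommGroup V] [Module ℂ V]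
    {ι κ : Type*} (Δ : Finset ι) (S : Finset κ) (neg : ι → ι)
    (x : ι → ℤ → A → Module.End ℂ V)        -- x α n a = x_α ⊗ tⁿ(a)
    (hlow hup : κ → ℤ → A → Module.End ℂ V) -- h_i ⊗ tⁿ(a), hⁱ ⊗ tⁿ(a)
    (K : A → Module.End ℂ V)                -- K(a)
    (Lop : ℤ → A → Module.End ℂ V)          -- L_j(b)
    (hv : ℂ)                                -- the dual Coxeter number h^∨
    (j : ℤ) (a b : A) : V → V := fun v =>
  (∑ α ∈ Δ, ∑ᶠ n : ℤ, (x (neg α) (-n) a) ((x α (n + j) b) v)) +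
  (∑ i ∈ S, ∑ᶠ n : ℤ, (hlow i (-n) a) ((hup i (n + j) b) v)) +
  (K a) ((Lop j b) v) + (K b) ((Lop j a) v) + (2 * hv) • (Lop j (a * b)) v

/-- (Part of Proposition 3.6)  For `j ≠ 0` and `j + k ≠ 0`, on modules in
category `O` one has `[L_k, T_j(a,b)] = (j - k) T_{j+k}(a,b)`. -/
theorem Lk_Tj_commutator
    (A : Type*) [CommRing A] [Algebra ℂ A]
    (V : Type*) [AddCommGroup V] [Module ℂ V]
    (ι κ : Type*) (Δ : Finset ι) (S : Finset κ)
    (neg : ι → ι) (hneg : ∀ α ∈ Δ, neg α ∈ Δ) (hinvol : ∀ α, neg (neg α) = α)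
    (x : ι → ℤ → A → Module.End ℂ V)
    (hlow hup : κ → ℤ → A → Module.End ℂ V)
    (K : A → Module.End ℂ V)
    (Lop : ℤ → A → Module.End ℂ V)
    (Lk : ℤ → Module.End ℂ V)               -- L_k (= L_k ⊗ 1)
    (hv : ℂ)
    -- bracket relations of the Virasoro part with τ(A):
    (hLx : ∀ (k : ℤ) (α : ι) (m : ℤ) (c : A),
      Lk k * x α m c - x α m c * Lk k = (m : ℂ) • x α (m + k) c)
    (hLhlow : ∀ (k : ℤ) (i : κ) (m : ℤ) (c : A),
      Lk k * hlow i m c - hlow i m c * Lk k = (m : ℂ) • hlow i (m + k) c)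
    (hLhup : ∀ (k : ℤ) (i : κ) (m : ℤ) (c : A),
      Lk k * hup i m c - hup i m c * Lk k = (m : ℂ) • hup i (m + k) c)
    (hLK : ∀ (k : ℤ) (c : A), Lk k * K c = K c * Lk k)
    (hLL : ∀ (k j : ℤ), j + k ≠ 0 → ∀ c : A,
      Lk k * Lop j c - Lop j c * Lk k = ((j : ℂ) - k) • Lop (j + k) c)
    -- category O local finiteness of the infinite sums:
    (hfin₁ : ∀ (α β : ι) (m : ℤ) (a b : A) (v : V),
      {n : ℤ | x α (-n) a (x β (n + m) b v) ≠ 0}.Finite)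
    (hfin₂ : ∀ (i : κ) (m : ℤ) (a b : A) (v : V),
      {n : ℤ | hlow i (-n) a (hup i (n + m) b v) ≠ 0}.Finite)
    (j k : ℤ) (hj : j ≠ 0) (hjk : j + k ≠ 0) (a b : A) :
    ∀ v : V,
      Lk k (Tjop Δ S neg x hlow hup K Lop hv j a b v) -
        Tjop Δ S neg x hlow hup K Lop hv j a b (Lk k v) =
      ((j : ℂ) - k) • Tjop Δ S neg x hlow hup K Lop hv (j + k) a b v := by
  intro v
  have hLLv : ∀ (c : A) (w : V),
      Lk k (Lop j c w) - Lop j c (Lk k w) = ((j : ℂ) - k) • Lop (j + k) c w := by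
    intro c w
    have h := congrArg (fun T : Module.End ℂ V => T w) (hLL k j hjk c)
    simpa only [LinearMap.sub_apply, Module.End.mul_apply, LinearMap.smul_apply] using h
  have hKcomm : ∀ (c : A) (w : V), Lk k (K c w) = K c (Lk k w) := by
    intro c w
    have h := congrArg (fun T : Module.End ℂ V => T w) (hLK k c)
    simpa only [Module.End.mul_apply] using h
  have d1 : Lk k (∑ α ∈ Δ, ∑ᶠ n : ℤ, x (neg α) (-n) a (x α (n + j) b v)) -
      ∑ α ∈ Δ, ∑ᶠ n : ℤ, x (neg α) (-n) a (x α (n + j) b (Lk k v)) =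
      ((j : ℂ) - k) • ∑ α ∈ Δ, ∑ᶠ n : ℤ, x (neg α) (-n) a (x α (n + (j + k)) b v) := by
    rw [map_sum, ← Finset.sum_sub_distrib, Finset.smul_sum]
    exact Finset.sum_congr rfl fun α _ =>
      pair_comm (fun m => x (neg α) m a) (fun m => x α m b) (Lk k) j k
        (fun m => hLx k (neg α) m a) (fun m => hLx k α m b)
        (fun j' w => hfin₁ (neg α) α j' a b w) v
  have d2 : Lk k (∑ i ∈ S, ∑ᶠ n : ℤ, hlow i (-n) a (hup i (n + j) b v)) -
      ∑ i ∈ S, ∑ᶠ n : ℤ, hlow i (-n) a (hup i (n + j) b (Lk k v)) =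
      ((j : ℂ) - k) • ∑ i ∈ S, ∑ᶠ n : ℤ, hlow i (-n) a (hup i (n + (j + k)) b v) := by
    rw [map_sum, ← Finset.sum_sub_distrib, Finset.smul_sum]
    exact Finset.sum_congr rfl fun i _ =>
      pair_comm (fun m => hlow i m a) (fun m => hup i m b) (Lk k) j k
        (fun m => hLhlow k i m a) (fun m => hLhup k i m b)
        (fun j' w => hfin₂ i j' a b w) v
  have d3 : Lk k (K a (Lop j b v)) - K a (Lop j b (Lk k v)) =
      ((j : ℂ) - k) • K a (Lop (j + k) b v) := by
    rw [hKcomm, ← map_sub, hLLv b v, map_smul]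
  have d4 : Lk k (K b (Lop j a v)) - K b (Lop j a (Lk k v)) =
      ((j : ℂ) - k) • K b (Lop (j + k) a v) := by
    rw [hKcomm, ← map_sub, hLLv a v, map_smul]
  have d5 : Lk k ((2 * hv) • Lop j (a * b) v) - (2 * hv) • Lop j (a * b) (Lk k v) =
      ((j : ℂ) - k) • (2 * hv) • Lop (j + k) (a * b) v := by
    rw [map_smul, ← smul_sub, hLLv (a * b) v, smul_comm]
  simp only [Tjop, map_add]
  calc _ = (Lk k (∑ α ∈ Δ, ∑ᶠ n : ℤ, x (neg α) (-n) a (x α (n + j) b v)) -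
        ∑ α ∈ Δ, ∑ᶠ n : ℤ, x (neg α) (-n) a (x α (n + j) b (Lk k v))) +
      ((Lk k (∑ i ∈ S, ∑ᶠ n : ℤ, hlow i (-n) a (hup i (n + j) b v)) -
        ∑ i ∈ S, ∑ᶠ n : ℤ, hlow i (-n) a (hup i (n + j) b (Lk k v))) +
      ((Lk k (K a (Lop j b v)) - K a (Lop j b (Lk k v))) +
      ((Lk k (K b (Lop j a v)) - K b (Lop j a (Lk k v))) +
      (Lk k ((2 * hv) • Lop j (a * b) v) - (2 * hv) • Lop j (a * b) (Lk k v))))) := by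
        abel
    _ = _ := by rw [d1, d2, d3, d4, d5]; simp only [smul_add]; abel
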